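/- arXiv:2211.01681 — 4 statements merged into one kernel-verified Lean document; each statement's English description precedes it below -/
import Mathlib

section
/- For a PSD matrix A with 0 ≤ A ≤ 1 (in the Loewner order) and a real number δ, the matrix exponential satisfies exp(δA) ≤ 1 + δ·exp(δ)·A in the Loewner order. -/
/-!
By the continuous functional calculus, `exp (δ • a)` and `1 + (δ * exp δ) • a` are the images of
`a` under `x ↦ exp (δ * x)` and `x ↦ 1 + δ * exp δ * x`, so it suffices to compare these functions
on the spectrum of `a`, which lies in `[0, 1]`. There, convexity of `exp` on the chord from `0` to
`δ` gives `exp (δ * x) ≤ 1 + x * (exp δ - 1)`, and `exp δ - 1 ≤ δ * exp δ` is the tangent line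
inequality for `exp` at `δ`.
-/

open scoped ComplexOrder

lemma Real.exp_sub_one_le_mul_exp (x : ℝ) : Real.exp x - 1 ≤ x * Real.exp x := by
  have h := mul_le_mul_of_nonneg_right (Real.one_sub_le_exp_neg x) (Real.exp_pos x).le
  rw [← Real.exp_add, neg_add_cancel, Real.exp_zero] at h
  linarith

lemma Real.exp_mul_le_one_add_mul_exp_mul (δ : ℝ) {x : ℝ} (hx : x ∈ Set.Icc (0 : ℝ) 1) :
    Real.exp (δ * x) ≤ 1 + δ * Real.exp δ * x := by
  obtain ⟨hx₀, hx₁⟩ := hx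
  have hchord : Real.exp (δ * x) ≤ (1 - x) + x * Real.exp δ := by
    simpa [mul_comm x δ] using convexOn_exp.2 (Set.mem_univ 0) (Set.mem_univ δ)
      (sub_nonneg.2 hx₁) hx₀ (sub_add_cancel 1 x)
  nlinarith [mul_le_mul_of_nonneg_left (Real.exp_sub_one_le_mul_exp δ) hx₀]

section CFC

variable {A : Type*} [NormedRing A] [StarRing A] [NormedAlgebra ℝ A] [PartialOrder A]
  [StarOrderedRing A] [ContinuousFunctionalCalculus ℝ A IsSelfAdjoint]
  [NonnegSpectrumClass ℝ A]

lemma spectrum_subset_Icc_of_nonneg_of_le_one {a : A} (ha₀ : 0 ≤ a) (ha₁ : a ≤ 1) :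
    spectrum ℝ a ⊆ Set.Icc 0 1 := fun x hx =>
  ⟨spectrum_nonneg_of_nonneg ha₀ hx,
    (le_algebraMap_iff_spectrum_le (IsSelfAdjoint.of_nonneg ha₀)).1 (by simpa using ha₁) x hx⟩

lemma exp_smul_le_one_add_smul [StarModule ℝ A] {a : A} (ha₀ : 0 ≤ a) (ha₁ : a ≤ 1) (δ : ℝ) :
    NormedSpace.exp (δ • a) ≤ 1 + (δ * Real.exp δ) • a := by
  have ha : IsSelfAdjoint a := IsSelfAdjoint.of_nonneg ha₀
  have hexp : NormedSpace.exp (δ • a) = cfc (fun x => Real.exp (δ * x)) a := by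
    rw [← CFC.real_exp_eq_normedSpace_exp ((IsSelfAdjoint.all δ).smul ha),
      ← cfc_comp_smul δ Real.exp a]
    rfl
  have hlin : 1 + (δ * Real.exp δ) • a = cfc (fun x => 1 + δ * Real.exp δ * x) a := by
    rw [cfc_const_add 1 _ a, cfc_const_mul _ _ a, cfc_id' ℝ a, Algebra.algebraMap_eq_smul_one,
      one_smul]
  rw [hexp, hlin]
  exact cfc_mono fun x hx => Real.exp_mul_le_one_add_mul_exp_mul δ
    (spectrum_subset_Icc_of_nonneg_of_le_one ha₀ ha₁ hx)

end CFC

/-- Fact: for a PSD matrix `A` with `0 ≤ A ≤ 1` in the Loewner order and a real `δ`,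
`exp (δ • A) ≤ 1 + δ • exp δ • A` in the Loewner order. -/
theorem exp_smul_loewner_le {n : Type*} [Fintype n] [DecidableEq n]
    (A : Matrix n n ℂ) (hA : A.PosSemidef) (hA1 : ((1 : Matrix n n ℂ) - A).PosSemidef)
    (δ : ℝ) :
    ((1 : Matrix n n ℂ) + (δ * Real.exp δ) • A - NormedSpace.exp (δ • A)).PosSemidef := by
  open scoped MatrixOrder Matrix.Norms.L2Operator in
  exact exp_smul_le_one_add_smul hA.nonneg hA1 δ
end

section
/- If P(t) is a differentiable matrix-valued function such that P(t) commutes with its derivative dP/dt at every time t, then d/dt exp(P(t)) = (dP/dt)·exp(P(t)) = exp(P(t))·(dP/dt). -/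
attribute [local instance] Matrix.frobeniusNormedRing Matrix.frobeniusNormedAlgebra

/-! Along the line `s ↦ x + s • y` through commuting `x` and `y` the exponential factors as
`exp x * exp (s • y)`, whose derivative at `s = 0` is `exp x * y`; so the derivative of `exp` at
`x` sends `y` to `exp x * y`, and the chain rule does the rest. -/

section

variable {𝕂 𝔸 : Type*} [RCLike 𝕂] [NormedRing 𝔸] [NormedAlgebra 𝕂 𝔸] [CompleteSpace 𝔸]

theorem fderiv_exp_apply_of_commute {x y : 𝔸} (hxy : Commute x y) :
    fderiv 𝕂 NormedSpace.exp x y = NormedSpace.exp x * y := by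
  have h_line : HasDerivAt (fun s : 𝕂 => x + s • y) y 0 := by
    simpa using ((hasDerivAt_id (0 : 𝕂)).smul_const y).const_add x
  have h_exp : HasFDerivAt NormedSpace.exp (fderiv 𝕂 NormedSpace.exp x) (x + (0 : 𝕂) • y) := by
    simpa using (NormedSpace.exp_analytic (𝕂 := 𝕂) x).differentiableAt.hasFDerivAt
  have h_factor : HasDerivAt (fun s : 𝕂 => NormedSpace.exp x * NormedSpace.exp (s • y))
      (NormedSpace.exp x * y) 0 := by
    simpa using (hasDerivAt_exp_smul_const (𝕂 := 𝕂) y 0).const_mul (NormedSpace.exp x)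
  -- `NormedSpace.exp_add_of_commute` is stated for `ℚ`-algebras.
  let +nondep : NormedAlgebra ℚ 𝔸 := .restrictScalars ℚ 𝕂 𝔸
  have h_split : (fun s : 𝕂 => NormedSpace.exp x * NormedSpace.exp (s • y)) =
      fun s => NormedSpace.exp (x + s • y) :=
    funext fun s => (NormedSpace.exp_add_of_commute (hxy.smul_right s)).symm
  rw [h_split] at h_factor
  exact (h_exp.comp_hasDerivAt 0 h_line).unique h_factor

theorem hasDerivAt_exp_of_commute {f : 𝕂 → 𝔸} {f' : 𝔸} {t : 𝕂} (hf : HasDerivAt f f' t)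
    (hcomm : Commute (f t) f') :
    HasDerivAt (fun s => NormedSpace.exp (f s)) (NormedSpace.exp (f t) * f') t := by
  rw [← fderiv_exp_apply_of_commute (𝕂 := 𝕂) hcomm]
  exact (NormedSpace.exp_analytic (f t)).differentiableAt.hasFDerivAt.comp_hasDerivAt t hf

end

/-- If `P t` commutes with its derivative `P' t` for all `t`, then
`d/dt exp (P t) = P' t * exp (P t) = exp (P t) * P' t`. -/
theorem hasDerivAt_matrix_exp_of_commute {n : Type*} [Fintype n] [DecidableEq n]
    (P P' : ℝ → Matrix n n ℂ)
    (hP : ∀ t, HasDerivAt P (P' t) t)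
    (hcomm : ∀ t, P t * P' t = P' t * P t) (t : ℝ) :
    HasDerivAt (fun s => NormedSpace.exp (P s)) (P' t * NormedSpace.exp (P t)) t ∧
      P' t * NormedSpace.exp (P t) = NormedSpace.exp (P t) * P' t := by
  have h_exp_comm : Commute (NormedSpace.exp (P t)) (P' t) := Commute.exp_left (hcomm t)
  refine ⟨?_, h_exp_comm.symm.eq⟩
  rw [← h_exp_comm.eq]
  exact hasDerivAt_exp_of_commute (hP t) (hcomm t)
end

section
/- Let A_{j-1} be positive definite Hermitian, C Hermitian with 0 ⪯ C ⪯ I, μ > 0, A_j = exp(log A_{j-1} + μC), and ρ_{j-1} = A_{j-1}/Tr(A_{j-1}). Then log(Tr A_j / Tr A_{j-1}) ≤ μ·exp(μ)·Tr(ρ_{j-1} C). -/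
open Matrix
open scoped ComplexOrder

/-- The principal logarithm of a Hermitian matrix (junk value `0` otherwise). -/
noncomputable def mlog {n : Type*} [Fintype n] [DecidableEq n] (A : Matrix n n ℂ) :
    Matrix n n ℂ :=
  if hA : A.IsHermitian then hA.cfc Real.log else 0

/-!
Write `X_s = log A_{j-1} + s C`, `F s = Tr exp X_s` and `h s = Tr (exp X_s C)`. Then `F' = h`,
and `h' s = Tr (C · D exp_{X_s} C)`, where `D exp` is the Fréchet derivative of the matrix
exponential. In an eigenbasis of `X_s` with eigenvalues `λ_i`, writing `B` for `C` in that
basis, `h' s = ∑ |B_ij|² (e^{λ_i} - e^{λ_j}) / (λ_i - λ_j)`, and the divided difference of `exp`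
is at most the mean `(e^{λ_i} + e^{λ_j}) / 2`, so `h' s ≤ Tr (exp X_s C²) ≤ h s` because
`C² ⪯ C`. Grönwall gives `h s ≤ e^s h 0`, hence `F μ ≤ F 0 + (e^μ - 1) h 0`, and the claim
follows from `log x ≤ x - 1` and `e^μ - 1 ≤ μ e^μ`.
-/

open Finset
open scoped Nat

lemma HasSum.factorial_inv_mul_nat_mul_pred {c : ℕ → ℝ} {S : ℝ}
    (h : HasSum (fun k => (k ! : ℝ)⁻¹ * c k) S) :
    HasSum (fun k => (k ! : ℝ)⁻¹ * (k * c k.pred)) S := by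
  have hshift (k : ℕ) :
      ((k + 1 : ℕ) ! : ℝ)⁻¹ * ((k + 1 : ℕ) * c (k + 1).pred) = (k ! : ℝ)⁻¹ * c k := by
    rw [Nat.factorial_succ, Nat.cast_mul, Nat.pred_succ]
    field_simp
  refine (hasSum_nat_add_iff' 1).mp ?_
  simpa only [hshift, range_one, sum_singleton, CharP.cast_eq_zero, zero_mul, mul_zero,
    sub_zero] using h

namespace Real

lemma hasSum_pow_div_factorial (a : ℝ) : HasSum (fun k : ℕ => a ^ k / k !) (exp a) := by
  rw [exp_eq_exp_ℝ]
  exact NormedSpace.expSeries_div_hasSum_exp a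

theorem two_mul_exp_sub_exp_le {a b : ℝ} (hba : b ≤ a) :
    2 * (exp a - exp b) ≤ (a - b) * (exp a + exp b) := by
  have hderiv (x : ℝ) : HasDerivAt (fun x => (x - b) * (exp x + exp b) - 2 * (exp x - exp b))
      (exp b - (1 - (x - b)) * exp x) x := by
    refine ((((hasDerivAt_id x).sub_const b).mul ((hasDerivAt_exp x).add_const (exp b))).sub
      (((hasDerivAt_exp x).sub_const (exp b)).const_mul 2)).congr_deriv ?_
    simp only [id_eq]
    ring
  have hmono := monotone_of_hasDerivAt_nonneg hderiv fun x => by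
    simp only [Pi.zero_apply]
    have h1 := add_one_le_exp (b - x)
    have h2 : exp (b - x) * exp x = exp b := by rw [← exp_add, sub_add_cancel]
    nlinarith [exp_pos x]
  simpa using hmono hba

theorem exp_sub_exp_div_sub_le {a b : ℝ} (hab : a ≠ b) :
    (exp a - exp b) / (a - b) ≤ (exp a + exp b) / 2 := by
  wlog hba : b < a generalizing a b
  · have := this hab.symm ((not_lt.mp hba).lt_of_ne hab)
    rwa [← neg_sub a b, ← neg_sub (exp a), neg_div_neg_eq, add_comm] at this
  rw [div_le_div_iff₀ (sub_pos.mpr hba) two_pos]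
  linarith [two_mul_exp_sub_exp_le hba.le]

/-- The divided difference `(e^a - e^b) / (a - b)` of `exp` (`e^a` when `a = b`), as the series
that appears in the derivative of the matrix exponential. -/
noncomputable def expDivDiff (a b : ℝ) : ℝ :=
  ∑' k : ℕ, (k ! : ℝ)⁻¹ * ∑ m ∈ range k, a ^ (k.pred - m) * b ^ m

lemma hasSum_expDivDiff_of_ne {a b : ℝ} (hab : a ≠ b) :
    HasSum (fun k : ℕ => (k ! : ℝ)⁻¹ * ∑ m ∈ range k, a ^ (k.pred - m) * b ^ m)
      ((exp a - exp b) / (a - b)) := by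
  have hgeom (k : ℕ) :
      ∑ m ∈ range k, a ^ (k.pred - m) * b ^ m = (a ^ k - b ^ k) / (a - b) := by
    have h := geom_sum₂_mul b a k
    rw [eq_div_iff (sub_ne_zero.mpr hab), Nat.pred_eq_sub_one]
    simp_rw [mul_comm (a ^ _)]
    linear_combination -h
  have hterm (k : ℕ) : (k ! : ℝ)⁻¹ * ∑ m ∈ range k, a ^ (k.pred - m) * b ^ m =
      (a ^ k / (k ! : ℝ) - b ^ k / (k ! : ℝ)) / (a - b) := by
    rw [hgeom]
    ring
  simp_rw [hterm]
  exact ((hasSum_pow_div_factorial a).sub (hasSum_pow_div_factorial b)).div_const (a - b)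

lemma hasSum_expDivDiff_self (a : ℝ) :
    HasSum (fun k : ℕ => (k ! : ℝ)⁻¹ * ∑ m ∈ range k, a ^ (k.pred - m) * a ^ m) (exp a) := by
  have hconst (k : ℕ) : ∑ m ∈ range k, a ^ (k.pred - m) * a ^ m = k * a ^ k.pred := by
    calc _ = ∑ m ∈ range k, a ^ k.pred := sum_congr rfl fun m hm => by
            rw [← pow_add, Nat.sub_add_cancel (Nat.le_pred_of_lt (mem_range.mp hm))]
      _ = _ := by simp
  simp_rw [hconst]
  exact HasSum.factorial_inv_mul_nat_mul_pred (c := (a ^ ·))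
    (by simpa [div_eq_inv_mul] using hasSum_pow_div_factorial a)

lemma hasSum_expDivDiff (a b : ℝ) :
    HasSum (fun k : ℕ => (k ! : ℝ)⁻¹ * ∑ m ∈ range k, a ^ (k.pred - m) * b ^ m)
      (expDivDiff a b) := by
  rcases eq_or_ne a b with rfl | hab
  · exact (hasSum_expDivDiff_self a).summable.hasSum
  · exact (hasSum_expDivDiff_of_ne hab).summable.hasSum

lemma expDivDiff_le (a b : ℝ) : expDivDiff a b ≤ (exp a + exp b) / 2 := by
  rcases eq_or_ne a b with rfl | hab
  · rw [expDivDiff, (hasSum_expDivDiff_self a).tsum_eq]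
    linarith
  · rw [expDivDiff, (hasSum_expDivDiff_of_ne hab).tsum_eq]
    exact exp_sub_exp_div_sub_le hab

theorem exp_sub_one_le_mul_exp_s14 (x : ℝ) : exp x - 1 ≤ x * exp x := by
  have h1 := one_sub_le_exp_neg x
  have h2 : exp (-x) * exp x = 1 := by rw [← exp_add, neg_add_cancel, exp_zero]
  nlinarith [exp_pos x]

end Real

lemma sum_sum_mul_le_of_le_average {ι : Type*} [Fintype ι] {w g : ι → ι → ℝ} {f : ι → ℝ}
    (hw : ∀ i j, 0 ≤ w i j) (hsymm : ∀ i j, w i j = w j i)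
    (hg : ∀ i j, g i j ≤ (f i + f j) / 2) :
    ∑ i, ∑ j, w i j * g i j ≤ ∑ i, ∑ j, w i j * f i := by
  have hswap : ∑ i, ∑ j, w i j * f j = ∑ i, ∑ j, w i j * f i := by
    rw [sum_comm]
    simp_rw [hsymm]
  calc ∑ i, ∑ j, w i j * g i j ≤ ∑ i, ∑ j, w i j * ((f i + f j) / 2) :=
        sum_le_sum fun i _ => sum_le_sum fun j _ => mul_le_mul_of_nonneg_left (hg i j) (hw i j)
    _ = (∑ i, ∑ j, w i j * f i + ∑ i, ∑ j, w i j * f j) / 2 := by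
        simp only [mul_add, add_div, sum_add_distrib, sum_div, mul_div_assoc]
    _ = ∑ i, ∑ j, w i j * f i := by rw [hswap]; exact add_self_div_two _

section Gronwall

open Real

theorem le_exp_mul_of_hasDerivAt_le_self {f f' : ℝ → ℝ} (hf : ∀ s, HasDerivAt f (f' s) s)
    (hf' : ∀ s, f' s ≤ f s) {s : ℝ} (hs : 0 ≤ s) : f s ≤ exp s * f 0 := by
  have hanti : Antitone fun t => exp (-t) * f t := by
    refine antitone_of_hasDerivAt_nonpos (f' := fun t => exp (-t) * (f' t - f t))
      (fun t => ?_) fun t =>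
        mul_nonpos_of_nonneg_of_nonpos (exp_pos _).le (sub_nonpos.mpr (hf' t))
    refine (((hasDerivAt_neg t).exp).mul (hf t)).congr_deriv ?_
    ring
  have h := hanti hs
  simp only [neg_zero, exp_zero, one_mul] at h
  calc f s = exp s * (exp (-s) * f s) := by
        rw [← mul_assoc, ← exp_add, add_neg_cancel, exp_zero, one_mul]
    _ ≤ exp s * f 0 := by gcongr

theorem le_add_exp_sub_one_mul_of_hasDerivAt {F f f' : ℝ → ℝ}
    (hF : ∀ s, HasDerivAt F (f s) s) (hf : ∀ s, HasDerivAt f (f' s) s) (hf' : ∀ s, f' s ≤ f s)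
    {μ : ℝ} (hμ : 0 ≤ μ) :
    F μ ≤ F 0 + (exp μ - 1) * f 0 := by
  have hderiv (s : ℝ) : HasDerivAt (fun s => F s - exp s * f 0) (f s - exp s * f 0) s :=
    (hF s).sub ((hasDerivAt_exp s).mul_const (f 0))
  have hanti : AntitoneOn (fun s => F s - exp s * f 0) (Set.Ici 0) := by
    refine antitoneOn_of_hasDerivWithinAt_nonpos (convex_Ici 0)
      (continuous_iff_continuousAt.mpr fun s => (hderiv s).continuousAt).continuousOn
      (fun s _ => (hderiv s).hasDerivWithinAt) fun s hs => ?_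
    rw [interior_Ici] at hs
    linarith [le_exp_mul_of_hasDerivAt_le_self hf hf' hs.le]
  have h := hanti Set.self_mem_Ici hμ hμ
  simp only [exp_zero, one_mul] at h
  linarith

end Gronwall

section ExpDeriv

open NormedSpace

noncomputable def expDeriv {𝔸 : Type*} [Ring 𝔸] [Algebra ℝ 𝔸] [TopologicalSpace 𝔸]
    (X Y : 𝔸) : 𝔸 :=
  ∑' k : ℕ, (k !⁻¹ : ℝ) • ∑ m ∈ range k, X ^ (k.pred - m) * Y * X ^ m

variable {𝔸 : Type*} [NormedRing 𝔸] [NormOneClass 𝔸]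

lemma norm_sum_pow_mul_mul_pow_le (X Y : 𝔸) (k : ℕ) :
    ‖∑ m ∈ range k, X ^ (k.pred - m) * Y * X ^ m‖ ≤ k * (‖X‖ ^ k.pred * ‖Y‖) := by
  calc ‖∑ m ∈ range k, X ^ (k.pred - m) * Y * X ^ m‖
      ≤ ∑ m ∈ range k, ‖X ^ (k.pred - m) * Y * X ^ m‖ := norm_sum_le _ _
    _ ≤ ∑ m ∈ range k, ‖X‖ ^ k.pred * ‖Y‖ := by
        refine sum_le_sum fun m hm => ?_
        have hm : k.pred - m + m = k.pred :=
          Nat.sub_add_cancel (Nat.le_pred_of_lt (mem_range.mp hm))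
        calc ‖X ^ (k.pred - m) * Y * X ^ m‖ ≤ ‖X‖ ^ (k.pred - m) * ‖Y‖ * ‖X‖ ^ m := by
              refine (norm_mul_le _ _).trans ?_
              gcongr
              · exact (norm_mul_le _ _).trans (by gcongr; exact norm_pow_le _ _)
              · exact norm_pow_le _ _
          _ = ‖X‖ ^ k.pred * ‖Y‖ := by rw [mul_right_comm, ← pow_add, hm]
    _ = k * (‖X‖ ^ k.pred * ‖Y‖) := by simp

lemma summable_factorial_inv_mul_nat_mul_pow_pred (K : ℝ) :
    Summable (fun k : ℕ => (k ! : ℝ)⁻¹ * (k * K ^ k.pred)) :=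
  (HasSum.factorial_inv_mul_nat_mul_pred (c := (K ^ ·))
    (by simpa [div_eq_inv_mul] using Real.hasSum_pow_div_factorial K)).summable

variable [NormedAlgebra ℝ 𝔸]

lemma norm_factorial_inv_smul_sum_pow_mul_mul_pow_le {X : 𝔸} {K : ℝ} (hX : ‖X‖ ≤ K) (Y : 𝔸)
    (k : ℕ) :
    ‖(k !⁻¹ : ℝ) • ∑ m ∈ range k, X ^ (k.pred - m) * Y * X ^ m‖ ≤
      ‖Y‖ * ((k ! : ℝ)⁻¹ * (k * K ^ k.pred)) := by
  rw [norm_smul, Real.norm_of_nonneg (by positivity)]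
  calc (k ! : ℝ)⁻¹ * ‖∑ m ∈ range k, X ^ (k.pred - m) * Y * X ^ m‖
      ≤ (k ! : ℝ)⁻¹ * (k * (K ^ k.pred * ‖Y‖)) := by
        gcongr
        exact (norm_sum_pow_mul_mul_pow_le X Y k).trans (by gcongr)
    _ = ‖Y‖ * ((k ! : ℝ)⁻¹ * (k * K ^ k.pred)) := by ring

variable [CompleteSpace 𝔸]

lemma hasSum_expDeriv (X Y : 𝔸) :
    HasSum (fun k : ℕ => (k !⁻¹ : ℝ) • ∑ m ∈ range k, X ^ (k.pred - m) * Y * X ^ m)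
      (expDeriv X Y) :=
  (Summable.of_norm_bounded ((summable_factorial_inv_mul_nat_mul_pow_pred ‖X‖).mul_left ‖Y‖)
    (norm_factorial_inv_smul_sum_pow_mul_mul_pow_le le_rfl Y)).hasSum

theorem hasDerivAt_exp_add_smul (X Y : 𝔸) (s : ℝ) :
    HasDerivAt (fun t : ℝ => exp (X + t • Y)) (expDeriv (X + s • Y) Y) s := by
  have hbound : ∀ t ∈ Metric.ball s 1, ‖X + t • Y‖ ≤ ‖X‖ + (|s| + 1) * ‖Y‖ := by
    intro t ht
    have : |t| ≤ |s| + 1 := by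
      have := abs_sub_abs_le_abs_sub t s
      rw [Metric.mem_ball, Real.dist_eq] at ht
      linarith
    calc ‖X + t • Y‖ ≤ ‖X‖ + |t| * ‖Y‖ := by
          simpa [norm_smul] using norm_add_le X (t • Y)
      _ ≤ ‖X‖ + (|s| + 1) * ‖Y‖ := by gcongr
  have hterm (k : ℕ) (t : ℝ) : HasDerivAt (fun t : ℝ => (k !⁻¹ : ℝ) • (X + t • Y) ^ k)
      ((k !⁻¹ : ℝ) • ∑ m ∈ range k, (X + t • Y) ^ (k.pred - m) * Y * (X + t • Y) ^ m) t := by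
    have hline : HasDerivAt (fun t : ℝ => X + t • Y) Y t := by
      simpa using ((hasDerivAt_id t).smul_const Y).const_add X
    exact (hline.pow' k).const_smul (k !⁻¹ : ℝ)
  rw [exp_eq_tsum ℝ]
  exact hasDerivAt_tsum_of_isPreconnected
    ((summable_factorial_inv_mul_nat_mul_pow_pred _).mul_left ‖Y‖) Metric.isOpen_ball
    (convex_ball s 1).isPreconnected (fun k t _ => hterm k t)
    (fun k t ht => norm_factorial_inv_smul_sum_pow_mul_mul_pow_le (hbound t ht) Y k)
    (Metric.mem_ball_self one_pos) (expSeries_summable' _) (Metric.mem_ball_self one_pos)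

end ExpDeriv

namespace Matrix

variable {n : Type*} [Fintype n] [DecidableEq n]

noncomputable def reTraceMulCLM (E : Matrix n n ℂ) : Matrix n n ℂ →L[ℝ] ℝ :=
  LinearMap.toContinuousLinearMap
    (Complex.reLm ∘ₗ (traceLinearMap n ℂ ℂ).restrictScalars ℝ ∘ₗ LinearMap.mulRight ℝ E)

lemma reTraceMulCLM_apply (E M : Matrix n n ℂ) : reTraceMulCLM E M = (M * E).trace.re := rfl

/- Matrices carry no global norm; the series and derivative facts below are proved with the
`L²` operator norm, for which `‖1‖ = 1` once `n` is nonempty. -/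

lemma hasSum_re_trace_pow_mul (X E : Matrix n n ℂ) :
    HasSum (fun k : ℕ => (k ! : ℝ)⁻¹ * (X ^ k * E).trace.re)
      (NormedSpace.exp X * E).trace.re := by
  open scoped Matrix.Norms.L2Operator in
  simpa [reTraceMulCLM_apply] using
    (NormedSpace.exp_series_hasSum_exp' (𝕂 := ℝ) X).mapL (reTraceMulCLM E)

lemma hasSum_re_trace_expDeriv_mul [Nonempty n] (X Y E : Matrix n n ℂ) :
    HasSum
      (fun k : ℕ => (k ! : ℝ)⁻¹ * ∑ m ∈ range k, (X ^ (k.pred - m) * Y * X ^ m * E).trace.re)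
      (expDeriv X Y * E).trace.re := by
  open scoped Matrix.Norms.L2Operator in
  simpa [reTraceMulCLM_apply, sum_mul, trace_sum] using
    (hasSum_expDeriv X Y).mapL (reTraceMulCLM E)

lemma hasDerivAt_re_trace_exp_add_smul_mul [Nonempty n] (X Y E : Matrix n n ℂ) (s : ℝ) :
    HasDerivAt (fun t : ℝ => (NormedSpace.exp (X + t • Y) * E).trace.re)
      (expDeriv (X + s • Y) Y * E).trace.re s := by
  open scoped Matrix.Norms.L2Operator in
  exact (reTraceMulCLM E).hasFDerivAt.comp_hasDerivAt s (hasDerivAt_exp_add_smul X Y s)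

lemma re_trace_expDeriv [Nonempty n] (X Y : Matrix n n ℂ) :
    (expDeriv X Y).trace.re = (NormedSpace.exp X * Y).trace.re := by
  have hterm (k : ℕ) :
      ∑ m ∈ range k, (X ^ (k.pred - m) * Y * X ^ m).trace.re =
        k * (X ^ k.pred * Y).trace.re := by
    calc _ = ∑ m ∈ range k, (X ^ k.pred * Y).trace.re := sum_congr rfl fun m hm => by
            rw [trace_mul_comm, ← mul_assoc, ← pow_add,
              Nat.add_sub_cancel' (Nat.le_pred_of_lt (mem_range.mp hm))]
      _ = _ := by simp
  have h := hasSum_re_trace_expDeriv_mul X Y 1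
  simp only [mul_one, hterm] at h
  exact h.unique (hasSum_re_trace_pow_mul X Y).factorial_inv_mul_nat_mul_pred

lemma hasDerivAt_re_trace_exp_add_smul [Nonempty n] (X Y : Matrix n n ℂ) (s : ℝ) :
    HasDerivAt (fun t : ℝ => (NormedSpace.exp (X + t • Y)).trace.re)
      (NormedSpace.exp (X + s • Y) * Y).trace.re s := by
  simpa [re_trace_expDeriv] using hasDerivAt_re_trace_exp_add_smul_mul X Y 1 s

lemma re_trace_diagonal_mul_mul_diagonal_mul (d e : n → ℝ) {B : Matrix n n ℂ}
    (hB : B.IsHermitian) :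
    (diagonal (fun i => (d i : ℂ)) * B * diagonal (fun i => (e i : ℂ)) * B).trace.re =
      ∑ i, ∑ j, Complex.normSq (B i j) * (d i * e j) := by
  simp only [trace, diag_apply, Complex.re_sum]
  refine sum_congr rfl fun i _ => ?_
  rw [mul_apply, Complex.re_sum]
  refine sum_congr rfl fun j _ => ?_
  rw [mul_diagonal, diagonal_mul, ← hB.apply i j, Complex.star_def, Complex.normSq_conj,
    ← Complex.ofReal_re (_ * _), Complex.ofReal_mul, Complex.normSq_eq_conj_mul_self]
  congr 1
  push_cast
  ring

lemma IsHermitian.exists_re_trace_pow_mul_pow_mul_eq {X C : Matrix n n ℂ} (hX : X.IsHermitian)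
    (hC : C.IsHermitian) :
    ∃ w : n → n → ℝ, (∀ i j, 0 ≤ w i j) ∧ (∀ i j, w i j = w j i) ∧
      ∀ a b : ℕ, (X ^ a * C * X ^ b * C).trace.re =
        ∑ i, ∑ j, w i j * (hX.eigenvalues i ^ a * hX.eigenvalues j ^ b) := by
  let ψ := Unitary.conjStarAlgAut ℂ (Matrix n n ℂ) (star hX.eigenvectorUnitary)
  have hB : (ψ C).IsHermitian := hC.isSelfAdjoint.map ψ
  have htrace (M : Matrix n n ℂ) : (ψ M).trace = M.trace := by
    simp [ψ, trace_mul_cycle]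
  have hpow (a : ℕ) : ψ (X ^ a) = diagonal (fun i => ((hX.eigenvalues i ^ a : ℝ) : ℂ)) := by
    rw [map_pow, hX.conjStarAlgAut_star_eigenvectorUnitary, diagonal_pow]
    congr 1
    ext i
    simp
  refine ⟨fun i j => Complex.normSq (ψ C i j), fun _ _ => Complex.normSq_nonneg _,
    fun i j => ?_, fun a b => ?_⟩
  · show Complex.normSq (ψ C i j) = Complex.normSq (ψ C j i)
    rw [← hB.apply i j, Complex.star_def, Complex.normSq_conj]
  · rw [← htrace, map_mul, map_mul, map_mul, hpow, hpow]
    exact re_trace_diagonal_mul_mul_diagonal_mul _ _ hB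

theorem IsHermitian.re_trace_expDeriv_mul_le [Nonempty n] {X C : Matrix n n ℂ}
    (hX : X.IsHermitian) (hC : C.IsHermitian) :
    (expDeriv X C * C).trace.re ≤ (NormedSpace.exp X * (C * C)).trace.re := by
  obtain ⟨w, hw, hsymm, htrace⟩ := hX.exists_re_trace_pow_mul_pow_mul_eq hC
  set d := hX.eigenvalues
  have hderiv : HasSum
      (fun k : ℕ => (k ! : ℝ)⁻¹ * ∑ m ∈ range k, (X ^ (k.pred - m) * C * X ^ m * C).trace.re)
      (∑ i, ∑ j, w i j * Real.expDivDiff (d i) (d j)) := by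
    have hterm (k : ℕ) :
        (k ! : ℝ)⁻¹ * ∑ m ∈ range k, (X ^ (k.pred - m) * C * X ^ m * C).trace.re =
          ∑ i, ∑ j, w i j * ((k ! : ℝ)⁻¹ * ∑ m ∈ range k, d i ^ (k.pred - m) * d j ^ m) := by
      simp only [htrace, mul_sum]
      rw [sum_comm]
      refine sum_congr rfl fun i _ => ?_
      rw [sum_comm]
      exact sum_congr rfl fun j _ => sum_congr rfl fun m _ => by ring
    simp_rw [hterm]
    exact hasSum_sum fun i _ => hasSum_sum fun j _ =>
      (Real.hasSum_expDivDiff _ _).mul_left (w i j)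
  have hexp : HasSum (fun k : ℕ => (k ! : ℝ)⁻¹ * (X ^ k * (C * C)).trace.re)
      (∑ i, ∑ j, w i j * Real.exp (d i)) := by
    have hterm (k : ℕ) : (k ! : ℝ)⁻¹ * (X ^ k * (C * C)).trace.re =
        ∑ i, ∑ j, w i j * (d i ^ k / k !) := by
      rw [← mul_assoc, ← mul_one (X ^ k * C), ← pow_zero X, htrace, mul_sum]
      exact sum_congr rfl fun i _ => by rw [mul_sum]; exact sum_congr rfl fun j _ => by ring
    simp_rw [hterm]
    exact hasSum_sum fun i _ => hasSum_sum fun j _ =>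
      (Real.hasSum_pow_div_factorial _).mul_left (w i j)
  rw [(hasSum_re_trace_expDeriv_mul X C C).unique hderiv,
    (hasSum_re_trace_pow_mul X (C * C)).unique hexp]
  exact sum_sum_mul_le_of_le_average hw hsymm fun i j => Real.expDivDiff_le _ _

lemma IsHermitian.re_trace_exp_mul_nonneg {X P : Matrix n n ℂ} (hX : X.IsHermitian)
    (hP : P.PosSemidef) : 0 ≤ (NormedSpace.exp X * P).trace.re := by
  set S := NormedSpace.exp ((2⁻¹ : ℝ) • X)
  have hS : S.IsHermitian := (hX.smul (IsSelfAdjoint.all _)).exp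
  have hSS : NormedSpace.exp X = S * S := by
    rw [← Matrix.exp_add_of_commute _ _ (Commute.refl _), ← add_smul]
    norm_num
  have h := (hP.conjTranspose_mul_mul_same S).trace_nonneg
  rw [hS.eq] at h
  rw [hSS, mul_assoc, trace_mul_comm]
  exact (Complex.nonneg_iff.mp h).1

lemma PosSemidef.sub_mul_self {𝕜 : Type*} [RCLike 𝕜] {C : Matrix n n 𝕜} (hC0 : C.PosSemidef)
    (hC1 : (1 - C).PosSemidef) : (C - C * C).PosSemidef := by
  have h := (hC0.conjTranspose_mul_mul_same (1 - C)).add (hC1.conjTranspose_mul_mul_same C)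
  rwa [conjTranspose_sub, conjTranspose_one, hC0.isHermitian.eq,
    show (1 - C) * C * (1 - C) + C * (1 - C) * C = C - C * C by noncomm_ring] at h

lemma IsHermitian.re_trace_exp_le_re_trace_exp_add_smul [Nonempty n] {H C : Matrix n n ℂ}
    (hH : H.IsHermitian) (hC : C.PosSemidef) {μ : ℝ} (hμ : 0 ≤ μ) :
    (NormedSpace.exp H).trace.re ≤ (NormedSpace.exp (H + μ • C)).trace.re := by
  have hmono := monotone_of_hasDerivAt_nonneg (hasDerivAt_re_trace_exp_add_smul H C) fun s =>
    (hH.add (hC.isHermitian.smul (IsSelfAdjoint.all _))).re_trace_exp_mul_nonneg hC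
  simpa using hmono hμ

theorem IsHermitian.re_trace_exp_add_smul_le [Nonempty n] {H C : Matrix n n ℂ}
    (hH : H.IsHermitian) (hC0 : C.PosSemidef) (hC1 : (1 - C).PosSemidef) {μ : ℝ} (hμ : 0 ≤ μ) :
    (NormedSpace.exp (H + μ • C)).trace.re ≤
      (NormedSpace.exp H).trace.re + (Real.exp μ - 1) * (NormedSpace.exp H * C).trace.re := by
  have hX (s : ℝ) : (H + s • C).IsHermitian :=
    hH.add (hC0.isHermitian.smul (IsSelfAdjoint.all _))
  have hbound (s : ℝ) :
      (expDeriv (H + s • C) C * C).trace.re ≤ (NormedSpace.exp (H + s • C) * C).trace.re := by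
    refine ((hX s).re_trace_expDeriv_mul_le hC0.isHermitian).trans ?_
    have := (hX s).re_trace_exp_mul_nonneg (hC0.sub_mul_self hC1)
    rw [mul_sub, trace_sub, Complex.sub_re] at this
    linarith
  simpa using le_add_exp_sub_one_mul_of_hasDerivAt (hasDerivAt_re_trace_exp_add_smul H C)
    (hasDerivAt_re_trace_exp_add_smul_mul H C C) hbound hμ

end Matrix

section MatrixLog

variable {n : Type*} [Fintype n] [DecidableEq n]

lemma mlog_eq_cfc {A : Matrix n n ℂ} (hA : A.IsHermitian) : mlog A = cfc Real.log A := by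
  rw [mlog, dif_pos hA, hA.cfc_eq]

lemma isHermitian_mlog (A : Matrix n n ℂ) : (mlog A).IsHermitian := by
  by_cases hA : A.IsHermitian
  · rw [mlog_eq_cfc hA]
    exact cfc_predicate _ _
  · rw [mlog, dif_neg hA]
    exact isHermitian_zero

open scoped Matrix.Norms.L2Operator MatrixOrder in
lemma exp_mlog {A : Matrix n n ℂ} (hA : A.PosDef) : NormedSpace.exp (mlog A) = A := by
  rw [mlog_eq_cfc hA.isHermitian]
  exact CFC.exp_log A (isStrictlyPositive_iff_posDef.mpr hA)

end MatrixLog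

theorem mmwu_log_trace_ratio_upper_bound_general {n : Type*} [Fintype n] [DecidableEq n]
    (Aprev : Matrix n n ℂ) (hAprev : Aprev.PosDef)
    (C : Matrix n n ℂ)
    (hC0 : C.PosSemidef) (hC1 : ((1 : Matrix n n ℂ) - C).PosSemidef)
    (μ : ℝ) (hμ : 0 < μ)
    (Aj : Matrix n n ℂ) (hAj : Aj = NormedSpace.exp (mlog Aprev + (μ : ℂ) • C))
    (ρprev : Matrix n n ℂ) (hρprev : ρprev = (Aprev.trace)⁻¹ • Aprev) :
    Real.log ((Aj.trace).re / (Aprev.trace).re)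
      ≤ μ * Real.exp μ * ((ρprev * C).trace).re := by
  rcases isEmpty_or_nonempty n with hn | hn
  · simp [trace]
  have hH := isHermitian_mlog Aprev
  rw [Complex.coe_smul] at hAj
  obtain ⟨ht, htim⟩ := Complex.pos_iff.mp hAprev.trace_pos
  set t := Aprev.trace.re
  set c := (Aprev * C).trace.re
  have hc : 0 ≤ c := by simpa [exp_mlog hAprev] using hH.re_trace_exp_mul_nonneg hC0
  have hlow : t ≤ Aj.trace.re := by
    simpa [hAj, exp_mlog hAprev] using hH.re_trace_exp_le_re_trace_exp_add_smul hC0 hμ.le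
  have hup : Aj.trace.re ≤ t + (Real.exp μ - 1) * c := by
    simpa [hAj, exp_mlog hAprev] using hH.re_trace_exp_add_smul_le hC0 hC1 hμ.le
  have htr : Aprev.trace = (t : ℂ) := Complex.ext (by simp [t]) (by simp [← htim])
  have hρ : (ρprev * C).trace.re = c / t := by
    rw [hρprev, smul_mul_assoc, trace_smul, smul_eq_mul, htr, ← Complex.ofReal_inv,
      Complex.re_ofReal_mul, div_eq_inv_mul]
  rw [hρ]
  calc Real.log (Aj.trace.re / t) ≤ Aj.trace.re / t - 1 :=
        Real.log_le_sub_one_of_pos (div_pos (ht.trans_le hlow) ht)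
    _ ≤ (Real.exp μ - 1) * (c / t) := by
        rw [div_sub_one ht.ne', mul_div_assoc', div_le_div_iff_of_pos_right ht]
        linarith
    _ ≤ μ * Real.exp μ * (c / t) := by
        gcongr
        exact Real.exp_sub_one_le_mul_exp_s14 μ

/-- MMWU trace upper-bound step: with `A_j = exp (log A_{j-1} + μ C)` for `0 ⪯ C ⪯ I` and
`μ > 0`, one has `log (Tr A_j / Tr A_{j-1}) ≤ μ e^μ Tr (ρ_{j-1} C)` where
`ρ_{j-1} = A_{j-1} / Tr A_{j-1}`. -/
theorem mmwu_log_trace_ratio_upper_bound {n : Type*} [Fintype n] [DecidableEq n]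
    (Aprev : Matrix n n ℂ) (hAprev : Aprev.PosDef)
    (C : Matrix n n ℂ) (hC : C.IsHermitian)
    (hC0 : C.PosSemidef) (hC1 : ((1 : Matrix n n ℂ) - C).PosSemidef)
    (μ : ℝ) (hμ : 0 < μ)
    (Aj : Matrix n n ℂ) (hAj : Aj = NormedSpace.exp (mlog Aprev + (μ : ℂ) • C))
    (ρprev : Matrix n n ℂ) (hρprev : ρprev = (Aprev.trace)⁻¹ • Aprev) :
    Real.log ((Aj.trace).re / (Aprev.trace).re)
      ≤ μ * Real.exp μ * ((ρprev * C).trace).re :=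
  mmwu_log_trace_ratio_upper_bound_general Aprev hAprev C hC0 hC1 μ hμ Aj hAj ρprev hρprev
end

section
/- Let ρ*, σ* be fixed positive definite density matrices and let ρ(t), σ(t) be differentiable trajectories of positive definite density matrices satisfying, under the commutativity assumption, dρ/dt = ρ(Φ(σ) − Tr(ρΦ(σ))I) and dσ/dt = σ(−Φ†(ρ) + Tr(σΦ†(ρ))I), where ρ(t) commutes with Φ(σ(t)) and σ(t) commutes with Φ†(ρ(t)), the fully-mixed equilibrium conditions Tr(ρ*Φ(σ)) = Tr(ρ*Φ(σ*)) and Tr(σ*Φ†(ρ)) = Tr(σ*Φ†(ρ*)) hold for all ρ, σ, and Tr(ρ*Φ(σ*)) = Tr(σ*Φ†(ρ*)). Then d/dt [S(ρ*‖ρ(t)) + S(σ*‖σ(t))] = 0. -/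
open Matrix
open scoped ComplexOrder

attribute [local instance] Matrix.frobeniusNormedAddCommGroup Matrix.frobeniusNormedSpace

/-!
For positive definite `X`, `log X = ∫₀¹ (X - 1) (1 + u (X - 1))⁻¹ du`: diagonalize `X` and
integrate the scalar identity `∫₀¹ (x - 1) / (1 + u (x - 1)) du = log x`. Differentiating under
the integral sign at a time where `ρ'` commutes with `ρ` gives `d/dt Tr(B log ρ) = Tr(B ρ' ρ⁻¹)`.
Along the replicator flow `ρ' ρ⁻¹ = Φ(σ) - Tr(ρ Φ(σ))`, so with `B = ρ*` and the equilibrium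
condition the `ρ`-part of the derivative is `Tr(ρ* Φ(σ*)) - Tr(ρ Φ(σ))`; likewise the `σ`-part is
`Tr(σ Φ†(ρ)) - Tr(σ* Φ†(ρ*))`. The two cancel by adjointness and `Tr(ρ* Φ(σ*)) = Tr(σ* Φ†(ρ*))`.
-/

open Set Topology Function

lemma one_add_mul_sub_one_pos {x u : ℝ} (hx : 0 < x) (hu : u ∈ Icc (0:ℝ) 1) :
    0 < 1 + u * (x - 1) := by
  rcases hu.2.lt_or_eq with h | rfl
  · nlinarith [mul_nonneg hu.1 hx.le]
  · linarith

lemma integral_sub_one_div_one_add_mul_sub_one {x : ℝ} (hx : 0 < x) :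
    ∫ u in (0:ℝ)..1, (x - 1) / (1 + u * (x - 1)) = Real.log x := by
  have hpos : ∀ u ∈ uIcc (0:ℝ) 1, 0 < 1 + u * (x - 1) := fun u hu =>
    one_add_mul_sub_one_pos hx (by rwa [uIcc_of_le zero_le_one] at hu)
  have hderiv : ∀ u ∈ uIcc (0:ℝ) 1,
      HasDerivAt (fun u => Real.log (1 + u * (x - 1))) ((x - 1) / (1 + u * (x - 1))) u := by
    intro u hu
    simpa [div_eq_inv_mul, mul_comm] using
      (((hasDerivAt_id u).mul_const (x - 1)).const_add 1).log (hpos u hu).ne'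
  have hint : IntervalIntegrable (fun u => (x - 1) / (1 + u * (x - 1))) MeasureTheory.volume 0 1 :=
    (continuousOn_const.div (by fun_prop) fun u hu => (hpos u hu).ne').intervalIntegrable
  rw [intervalIntegral.integral_eq_sub_of_hasDerivAt hderiv hint]
  simp

theorem hasDerivAt_intervalIntegral_of_continuousOn {E : Type*} [NormedAddCommGroup E]
    [NormedSpace ℝ E] [CompleteSpace E] {F F' : ℝ → ℝ → E} {K : Set ℝ} {t a b : ℝ}
    (hK : K ∈ 𝓝 t) (hKc : IsCompact K) (hF : ∀ s ∈ K, ContinuousOn (F s) (uIcc a b))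
    (hF' : ContinuousOn (uncurry F') (K ×ˢ uIcc a b))
    (hderiv : ∀ s ∈ K, ∀ u ∈ uIcc a b, HasDerivAt (F · u) (F' s u) s) :
    HasDerivAt (fun s => ∫ u in a..b, F s u) (∫ u in a..b, F' t u) t := by
  obtain ⟨C, hC⟩ := (hKc.prod isCompact_uIcc).exists_bound_of_continuousOn hF'
  have hF't : ContinuousOn (F' t) (uIcc a b) :=
    hF'.comp (Continuous.prodMk_right t).continuousOn fun u hu => ⟨mem_of_mem_nhds hK, hu⟩
  refine (intervalIntegral.hasDerivAt_integral_of_dominated_loc_of_deriv_le (bound := fun _ => C)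
    hK ?_ (hF t (mem_of_mem_nhds hK)).intervalIntegrable
    ((hF't.mono uIoc_subset_uIcc).aestronglyMeasurable measurableSet_uIoc) ?_
    intervalIntegrable_const ?_).2
  · filter_upwards [hK] with s hs
    exact ((hF s hs).mono uIoc_subset_uIcc).aestronglyMeasurable measurableSet_uIoc
  · exact .of_forall fun u hu s hs => hC (s, u) ⟨hs, uIoc_subset_uIcc hu⟩
  · exact .of_forall fun u hu s hs => hderiv s hs u (uIoc_subset_uIcc hu)

lemma mul_add_mul_neg_eq_of_commute {A : Type*} [Ring A] [Algebra ℝ A] {D P R : A}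
    (hDP : Commute D P) (hDR : Commute D R) (hPR : Commute P R) (u : ℝ) :
    D * R + P * -(R * (u • D) * R) = D * (u • -(R * P * R) + R) := by
  simp only [mul_add, mul_neg, smul_neg, smul_mul_assoc, mul_smul_comm, mul_assoc]
  rw [hDR.symm.left_comm, hDP.symm.left_comm, hPR.symm.left_comm, add_comm]

namespace Matrix

attribute [local instance] frobeniusNormedRing frobeniusNormedAlgebra

lemma _root_.Commute.matrix_inv_right {n R : Type*} [Fintype n] [DecidableEq n] [CommRing R]
    {A B : Matrix n n R} (h : Commute A B) : Commute A B⁻¹ := by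
  by_cases hB : IsUnit B.det
  · calc A * B⁻¹ = B⁻¹ * B * A * B⁻¹ := by rw [nonsing_inv_mul _ hB, Matrix.one_mul]
      _ = B⁻¹ * A * B * B⁻¹ := by rw [Matrix.mul_assoc B⁻¹, ← h.eq, ← Matrix.mul_assoc]
      _ = B⁻¹ * A := by rw [Matrix.mul_assoc _ B, mul_nonsing_inv _ hB, Matrix.mul_one]
  · rw [nonsing_inv_apply_not_isUnit _ hB]
    exact Commute.zero_right A

lemma _root_.HasDerivAt.matrix_trace {n : Type*} [Fintype n] {A : ℝ → Matrix n n ℂ}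
    {A' : Matrix n n ℂ} {t : ℝ} (h : HasDerivAt A A' t) :
    HasDerivAt (fun s => (A s).trace) A'.trace t :=
  (LinearMap.toContinuousLinearMap ((traceLinearMap n ℂ ℂ).restrictScalars ℝ)).hasFDerivAt
    |>.comp_hasDerivAt t h

lemma PosDef.one_add_smul_sub_one {n : Type*} [DecidableEq n] {X : Matrix n n ℂ} (hX : X.PosDef)
    {u : ℝ} (hu : u ∈ Icc (0:ℝ) 1) : (1 + u • (X - 1)).PosDef := by
  rcases hu.2.lt_or_eq with h | rfl
  · have h1 : ((1 - u) • (1 : Matrix n n ℂ)).PosDef := PosDef.one.smul (by linarith)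
    convert h1.add_posSemidef (hX.posSemidef.smul hu.1) using 1
    module
  · simpa using hX

variable {n : Type*} [Fintype n] [DecidableEq n]

lemma _root_.ContinuousOn.matrix_inv {X : Type*} [TopologicalSpace X] {f : X → Matrix n n ℂ}
    {s : Set X} (hf : ContinuousOn f s) (hdet : ∀ x ∈ s, (f x).det ≠ 0) :
    ContinuousOn (fun x => (f x)⁻¹) s := fun x hx =>
  (continuousAt_matrix_inv _ (by simpa [Ring.inverse_eq_inv'] using continuousAt_inv₀ (hdet x hx))
    ).comp_continuousWithinAt (hf x hx)

lemma _root_.HasDerivAt.matrix_inv {A : ℝ → Matrix n n ℂ} {A' : Matrix n n ℂ} {t : ℝ}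
    (h : HasDerivAt A A' t) (hA : IsUnit (A t)) :
    HasDerivAt (fun s => (A s)⁻¹) (-((A t)⁻¹ * A' * (A t)⁻¹)) t := by
  have hinv := hasFDerivAt_ringInverse (𝕜 := ℝ) hA.unit
  rw [hA.unit_spec] at hinv
  have h' := hinv.comp_hasDerivAt t h
  rw [_root_.neg_apply, ContinuousLinearMap.mulLeftRight_apply, coe_units_inv, hA.unit_spec] at h'
  rwa [show (fun s => (A s)⁻¹) = Ring.inverse ∘ A from funext fun s => nonsing_inv_eq_ringInverse _]

lemma IsHermitian.trace_mul_cfc {A : Matrix n n ℂ} (hA : A.IsHermitian) (B : Matrix n n ℂ)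
    (f : ℝ → ℝ) : (B * hA.cfc f).trace = ∑ k, (star (hA.eigenvectorUnitary : Matrix n n ℂ) * B
      * hA.eigenvectorUnitary) k k * (f (hA.eigenvalues k) : ℂ) := by
  rw [IsHermitian.cfc, Unitary.conjStarAlgAut_apply, ← Matrix.mul_assoc, ← Matrix.mul_assoc,
    trace_mul_cycle]
  simp only [trace, diag_apply, mul_diagonal, Function.comp_apply]
  simp only [Matrix.mul_assoc]
  rfl

lemma sub_one_mul_one_add_smul_sub_one_inv_eq_cfc {X : Matrix n n ℂ} (hX : X.PosDef) {u : ℝ}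
    (hu : u ∈ Icc (0:ℝ) 1) :
    (X - 1) * (1 + u • (X - 1))⁻¹ = hX.1.cfc (fun x => (x - 1) / (1 + u * (x - 1))) := by
  have hX' : IsSelfAdjoint X := hX.1
  have hcont : ∀ f : ℝ → ℝ, ContinuousOn f (spectrum ℝ X) :=
    fun f => X.finite_real_spectrum.continuousOn f
  have hne : ∀ x ∈ spectrum ℝ X, 1 + u * (x - 1) ≠ 0 := by
    rw [hX.1.spectrum_real_eq_range_eigenvalues]
    rintro - ⟨i, rfl⟩
    exact (one_add_mul_sub_one_pos (hX.eigenvalues_pos i) hu).ne'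
  rw [← hX.1.cfc_eq, cfc_map_div _ _ X hne (hcont _) (hcont _), nonsing_inv_eq_ringInverse,
    cfc_const_add .., cfc_const_mul .., cfc_sub .., cfc_id' .., cfc_const_one .., map_one]

theorem trace_mul_mlog_eq_intervalIntegral {X : Matrix n n ℂ} (hX : X.PosDef) (B : Matrix n n ℂ) :
    (B * mlog X).trace = ∫ u in (0:ℝ)..1, (B * ((X - 1) * (1 + u • (X - 1))⁻¹)).trace := by
  set c := fun k => (star (hX.1.eigenvectorUnitary : Matrix n n ℂ) * B
      * hX.1.eigenvectorUnitary) k k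
  have hcongr : EqOn (fun u : ℝ => (B * ((X - 1) * (1 + u • (X - 1))⁻¹)).trace)
      (fun u => ∑ k, c k * (((hX.1.eigenvalues k - 1) / (1 + u * (hX.1.eigenvalues k - 1)) : ℝ) : ℂ))
      (uIcc 0 1) := fun u hu => by
    rw [uIcc_of_le zero_le_one] at hu
    simp only [sub_one_mul_one_add_smul_sub_one_inv_eq_cfc hX hu, hX.1.trace_mul_cfc, c]
  have hint : ∀ k ∈ Finset.univ, IntervalIntegrable (fun u : ℝ =>
      c k * (((hX.1.eigenvalues k - 1) / (1 + u * (hX.1.eigenvalues k - 1)) : ℝ) : ℂ))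
      MeasureTheory.volume 0 1 := fun k _ => by
    refine ContinuousOn.intervalIntegrable (continuousOn_const.mul
      (Complex.continuous_ofReal.comp_continuousOn (continuousOn_const.div (by fun_prop) ?_)))
    intro u hu
    rw [uIcc_of_le zero_le_one] at hu
    exact (one_add_mul_sub_one_pos (hX.eigenvalues_pos k) hu).ne'
  rw [intervalIntegral.integral_congr hcongr, intervalIntegral.integral_finsetSum hint, mlog,
    dif_pos hX.1, hX.1.trace_mul_cfc]
  refine Finset.sum_congr rfl fun k _ => ?_
  rw [intervalIntegral.integral_const_mul, intervalIntegral.integral_ofReal,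
    integral_sub_one_div_one_add_mul_sub_one (hX.eigenvalues_pos k)]

lemma continuousOn_one_add_smul_sub_one_inv :
    ContinuousOn (fun p : Matrix n n ℂ × ℝ => (1 + p.2 • (p.1 - 1))⁻¹)
      ({X | X.PosDef} ×ˢ Icc 0 1) :=
  ContinuousOn.matrix_inv (by fun_prop) fun p hp => (hp.1.one_add_smul_sub_one hp.2).det_pos.ne'

/-- The integrand is the derivative of `(X - 1) * (1 + u • (X - 1))⁻¹` in the direction `D`;
when `D` commutes with `X` it is the `u`-derivative of `D * (u • (1 + u • (X - 1))⁻¹)`. -/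
lemma intervalIntegral_trace_mul_resolvent_deriv {X D : Matrix n n ℂ} (hX : X.PosDef)
    (hDX : Commute D X) (B : Matrix n n ℂ) :
    ∫ u in (0:ℝ)..1, (B * (D * (1 + u • (X - 1))⁻¹
      + (X - 1) * -((1 + u • (X - 1))⁻¹ * (u • D) * (1 + u • (X - 1))⁻¹))).trace
      = (B * (D * X⁻¹)).trace := by
  have hderiv : ∀ u ∈ uIcc (0:ℝ) 1,
      HasDerivAt (fun u : ℝ => (B * (D * (u • (1 + u • (X - 1))⁻¹))).trace)
        (B * (D * (1 + u • (X - 1))⁻¹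
          + (X - 1) * -((1 + u • (X - 1))⁻¹ * (u • D) * (1 + u • (X - 1))⁻¹))).trace u := by
    intro u hu
    rw [uIcc_of_le zero_le_one] at hu
    have h := ((hasDerivAt_id u).smul ((((hasDerivAt_id u).smul_const (X - 1)).const_add 1
      ).matrix_inv (hX.one_add_smul_sub_one hu).isUnit) |>.const_mul D |>.const_mul B).matrix_trace
    simp only [id, one_smul] at h
    have hDP : Commute D (X - 1) := hDX.sub_right (Commute.one_right D)
    rw [mul_add_mul_neg_eq_of_commute hDP
      ((Commute.one_right D).add_right (hDP.smul_right u)).matrix_inv_right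
      ((Commute.one_right _).add_right ((Commute.refl _).smul_right u)).matrix_inv_right u]
    exact h
  have hR : ContinuousOn (fun u : ℝ => (1 + u • (X - 1))⁻¹) (uIcc 0 1) := by
    rw [uIcc_of_le zero_le_one]
    exact continuousOn_one_add_smul_sub_one_inv.comp (f := fun u : ℝ => (X, u))
      (continuous_const.prodMk continuous_id).continuousOn fun u hu => ⟨hX, hu⟩
  have hint : IntervalIntegrable (fun u : ℝ => (B * (D * (1 + u • (X - 1))⁻¹
      + (X - 1) * -((1 + u • (X - 1))⁻¹ * (u • D) * (1 + u • (X - 1))⁻¹))).trace)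
      MeasureTheory.volume 0 1 :=
    ContinuousOn.intervalIntegrable (by fun_prop)
  rw [intervalIntegral.integral_eq_sub_of_hasDerivAt hderiv hint]
  simp only [one_smul, zero_smul, add_sub_cancel, Matrix.mul_zero, trace_zero, sub_zero]

theorem hasDerivAt_trace_mul_mlog {ρ d : ℝ → Matrix n n ℂ} (hρ : ∀ s, (ρ s).PosDef)
    (hd : ∀ s, HasDerivAt ρ (d s) s) (hdc : Continuous d) (B : Matrix n n ℂ) {t : ℝ}
    (hcomm : Commute (d t) (ρ t)) :
    HasDerivAt (fun s => (B * mlog (ρ s)).trace) ((B * (d t * (ρ t)⁻¹)).trace) t := by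
  have hρc : Continuous ρ := continuous_iff_continuousAt.2 fun s => (hd s).continuousAt
  have hR : ContinuousOn (fun p : ℝ × ℝ => (1 + p.2 • (ρ p.1 - 1))⁻¹) (univ ×ˢ uIcc 0 1) := by
    rw [uIcc_of_le zero_le_one]
    exact continuousOn_one_add_smul_sub_one_inv.comp (f := fun p : ℝ × ℝ => (ρ p.1, p.2))
      (by fun_prop) fun p hp => ⟨hρ p.1, hp.2⟩
  have hderiv : ∀ s, ∀ u ∈ uIcc (0:ℝ) 1,
      HasDerivAt (fun s => (B * ((ρ s - 1) * (1 + u • (ρ s - 1))⁻¹)).trace)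
        (B * (d s * (1 + u • (ρ s - 1))⁻¹
          + (ρ s - 1) * -((1 + u • (ρ s - 1))⁻¹ * (u • d s) * (1 + u • (ρ s - 1))⁻¹))).trace s := by
    intro s u hu
    rw [uIcc_of_le zero_le_one] at hu
    exact ((((hd s).sub_const 1).mul ((((hd s).sub_const 1).const_smul u).const_add 1 |>.matrix_inv
      ((hρ s).one_add_smul_sub_one hu).isUnit)).const_mul B).matrix_trace
  rw [← intervalIntegral_trace_mul_resolvent_deriv (hρ t) hcomm B,
    funext fun s => trace_mul_mlog_eq_intervalIntegral (hρ s) B]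
  refine hasDerivAt_intervalIntegral_of_continuousOn (Metric.closedBall_mem_nhds t one_pos)
    (isCompact_closedBall t 1) (fun s _ => ?_) ?_ fun s _ => hderiv s
  · have hRs := hR.comp (f := fun u : ℝ => (s, u)) (by fun_prop) fun u hu => ⟨mem_univ s, hu⟩
    fun_prop
  · refine ContinuousOn.mono ?_ (prod_mono (subset_univ _) subset_rfl)
    fun_prop

theorem hasDerivAt_trace_mul_mlog_of_hasDerivAt_mul {ρ M : ℝ → Matrix n n ℂ}
    (hρ : ∀ s, (ρ s).PosDef) (hM : Continuous M) (hderiv : ∀ s, HasDerivAt ρ (ρ s * M s) s)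
    (B : Matrix n n ℂ) {t : ℝ} (hcomm : Commute (ρ t) (M t)) :
    HasDerivAt (fun s => (B * mlog (ρ s)).trace) (B * M t).trace t := by
  have hρc : Continuous ρ := continuous_iff_continuousAt.2 fun s => (hderiv s).continuousAt
  have h := hasDerivAt_trace_mul_mlog hρ hderiv (hρc.mul hM) B
    ((Commute.refl _).mul_left hcomm.symm)
  rwa [hcomm.eq, Matrix.mul_assoc, mul_nonsing_inv _ (hρ t).det_pos.ne'.isUnit,
    Matrix.mul_one] at h

lemma trace_mul_smul_one {P : Matrix n n ℂ} (hP : P.trace = 1) (c : ℂ) :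
    (P * c • (1 : Matrix n n ℂ)).trace = c := by
  rw [mul_smul_comm, Matrix.mul_one, trace_smul, hP, smul_eq_mul, mul_one]

end Matrix

theorem total_relative_entropy_invariant_general
    {n m : Type*} [Fintype n] [DecidableEq n] [Fintype m] [DecidableEq m]
    (Φ : Matrix m m ℂ →ₗ[ℂ] Matrix n n ℂ) (Φd : Matrix n n ℂ →ₗ[ℂ] Matrix m m ℂ)
    (hadj : ∀ (ρ : Matrix n n ℂ) (σ : Matrix m m ℂ),
      ((ρ * Φ σ).trace) = ((σ * Φd ρ).trace))
    (ρstar : Matrix n n ℂ) (σstar : Matrix m m ℂ)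
    (htrρstar : ρstar.trace = 1) (htrσstar : σstar.trace = 1)
    (ρ : ℝ → Matrix n n ℂ) (σ : ℝ → Matrix m m ℂ)
    (hρ : ∀ t, (ρ t).PosDef) (hσ : ∀ t, (σ t).PosDef)
    (htrρ : ∀ t, (ρ t).trace = 1) (htrσ : ∀ t, (σ t).trace = 1)
    (hρcomm : ∀ t, ρ t * Φ (σ t) = Φ (σ t) * ρ t)
    (hσcomm : ∀ t, σ t * Φd (ρ t) = Φd (ρ t) * σ t)
    (hρderiv : ∀ t, HasDerivAt ρ
      (ρ t * (Φ (σ t) - ((ρ t * Φ (σ t)).trace) • (1 : Matrix n n ℂ))) t)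
    (hσderiv : ∀ t, HasDerivAt σ
      (σ t * (-(Φd (ρ t)) + ((σ t * Φd (ρ t)).trace) • (1 : Matrix m m ℂ))) t)
    (heqρ : ∀ σ' : Matrix m m ℂ, σ'.PosSemidef → σ'.trace = 1 →
      (ρstar * Φ σ').trace = (ρstar * Φ σstar).trace)
    (heqσ : ∀ ρ' : Matrix n n ℂ, ρ'.PosSemidef → ρ'.trace = 1 →
      (σstar * Φd ρ').trace = (σstar * Φd ρstar).trace)
    (heq : (ρstar * Φ σstar).trace = (σstar * Φd ρstar).trace) :
    ∀ t, HasDerivAt (fun s =>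
        ((ρstar * (mlog ρstar - mlog (ρ s))).trace).re
          + ((σstar * (mlog σstar - mlog (σ s))).trace).re) 0 t := by
  intro t
  have hρc : Continuous ρ := continuous_iff_continuousAt.2 fun s => (hρderiv s).continuousAt
  have hσc : Continuous σ := continuous_iff_continuousAt.2 fun s => (hσderiv s).continuousAt
  have hΦ : Continuous Φ := Φ.continuous_of_finiteDimensional
  have hΦd : Continuous Φd := Φd.continuous_of_finiteDimensional
  have hρ' := hasDerivAt_trace_mul_mlog_of_hasDerivAt_mul hρ (by fun_prop) hρderiv ρstar
    (Commute.sub_right (hρcomm t) ((Commute.one_right _).smul_right _))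
  have hσ' := hasDerivAt_trace_mul_mlog_of_hasDerivAt_mul hσ (by fun_prop) hσderiv σstar
    (Commute.add_right (Commute.neg_right (hσcomm t)) ((Commute.one_right _).smul_right _))
  rw [Matrix.mul_sub, trace_sub, trace_mul_smul_one htrρstar,
    heqρ _ (hσ t).posSemidef (htrσ t)] at hρ'
  rw [Matrix.mul_add, trace_add, Matrix.mul_neg, trace_neg, trace_mul_smul_one htrσstar,
    heqσ _ (hρ t).posSemidef (htrρ t)] at hσ'
  have h := (hρ'.add hσ').const_sub ((ρstar * mlog ρstar).trace + (σstar * mlog σstar).trace)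
  rw [heq, hadj, show ∀ a b : ℂ, -(a - b + (-a + b)) = 0 by intros; ring] at h
  refine (Complex.reCLM.hasFDerivAt.comp_hasDerivAt t h).congr_of_eventuallyEq
    (.of_forall fun s => ?_) |>.congr_deriv (map_zero _)
  simp only [Matrix.mul_sub, trace_sub, Complex.sub_re, Pi.add_apply, Function.comp_apply,
    Complex.reCLM_apply, Complex.add_re]
  ring

/-- Conservation of the total quantum relative entropy under (commutative) quantum
replicator dynamics at a fully-mixed Nash equilibrium. -/
theorem total_relative_entropy_invariant
    {n m : Type*} [Fintype n] [DecidableEq n] [Fintype m] [DecidableEq m]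
    (Φ : Matrix m m ℂ →ₗ[ℂ] Matrix n n ℂ) (Φd : Matrix n n ℂ →ₗ[ℂ] Matrix m m ℂ)
    (hadj : ∀ (ρ : Matrix n n ℂ) (σ : Matrix m m ℂ),
      ((ρ * Φ σ).trace) = ((σ * Φd ρ).trace))
    (ρstar : Matrix n n ℂ) (σstar : Matrix m m ℂ)
    (hρstar : ρstar.PosDef) (hσstar : σstar.PosDef)
    (htrρstar : ρstar.trace = 1) (htrσstar : σstar.trace = 1)
    (ρ : ℝ → Matrix n n ℂ) (σ : ℝ → Matrix m m ℂ)
    (hρ : ∀ t, (ρ t).PosDef) (hσ : ∀ t, (σ t).PosDef)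
    (htrρ : ∀ t, (ρ t).trace = 1) (htrσ : ∀ t, (σ t).trace = 1)
    (hρcomm : ∀ t, ρ t * Φ (σ t) = Φ (σ t) * ρ t)
    (hσcomm : ∀ t, σ t * Φd (ρ t) = Φd (ρ t) * σ t)
    (hρderiv : ∀ t, HasDerivAt ρ
      (ρ t * (Φ (σ t) - ((ρ t * Φ (σ t)).trace) • (1 : Matrix n n ℂ))) t)
    (hσderiv : ∀ t, HasDerivAt σ
      (σ t * (-(Φd (ρ t)) + ((σ t * Φd (ρ t)).trace) • (1 : Matrix m m ℂ))) t)
    (heqρ : ∀ σ' : Matrix m m ℂ, σ'.PosSemidef → σ'.trace = 1 →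
      (ρstar * Φ σ').trace = (ρstar * Φ σstar).trace)
    (heqσ : ∀ ρ' : Matrix n n ℂ, ρ'.PosSemidef → ρ'.trace = 1 →
      (σstar * Φd ρ').trace = (σstar * Φd ρstar).trace)
    (heq : (ρstar * Φ σstar).trace = (σstar * Φd ρstar).trace) :
    ∀ t, HasDerivAt (fun s =>
        ((ρstar * (mlog ρstar - mlog (ρ s))).trace).re
          + ((σstar * (mlog σstar - mlog (σ s))).trace).re) 0 t :=
  total_relative_entropy_invariant_general Φ Φd hadj ρstar σstar htrρstar htrσstar ρ σ hρ hσ htrρ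
    htrσ hρcomm hσcomm hρderiv hσderiv heqρ heqσ heq
end
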